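/- Let L be a Lie algebra and r ∈ Im(1−τ) ⊂ L ⊗ L. Define Δ_r(x) = x·r (adjoint diagonal action). Then for all x ∈ L, (1 + ξ + ξ²)·(1 ⊗ Δ_r)·Δ_r(x) = x·c(r), where ξ is the cyclic permutation map on L^{⊗3}. -/

import Mathlib

open TensorProduct

variable (F : Type) [Field F] (L : Type) [LieRing L] [LieAlgebra F L]

/-- The Lie bracket of `L` as a bilinear map. -/
noncomputable def bkL : L →ₗ[F] L →ₗ[F] L :=
  LinearMap.mk₂ F (fun x y => ⁅x, y⁆) add_lie smul_lie lie_add lie_smul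

abbrev VL := L ⊗[F] L

/-- The adjoint diagonal action of `L` on `L ⊗ L`: `x · (a ⊗ b) = [x,a] ⊗ b + a ⊗ [x,b]`. -/
noncomputable def adVbL : L →ₗ[F] VL F L →ₗ[F] VL F L :=
  ((LinearMap.rTensorHom L : (L →ₗ[F] L) →ₗ[F] (VL F L →ₗ[F] VL F L)) ∘ₗ bkL F L)
    + ((LinearMap.lTensorHom L : (L →ₗ[F] L) →ₗ[F] (VL F L →ₗ[F] VL F L)) ∘ₗ bkL F L)

/-- The twist map `τ(x ⊗ y) = y ⊗ x`. -/
noncomputable def tauL : VL F L →ₗ[F] VL F L := (TensorProduct.comm F L L).toLinearMap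

/-- The map `1 - τ`. -/
noncomputable def oneMinusTauL : VL F L →ₗ[F] VL F L where
  toFun v := v - tauL F L v
  map_add' x y := by
    simp only [map_add]; exact sub_add_sub_comm x (tauL F L x) y (tauL F L y) ▸ rfl
  map_smul' c x := by simp only [map_smul, RingHom.id_apply, smul_sub]

/-- `Im (1 - τ) ⊂ L ⊗ L`. -/
noncomputable def skewImL : Submodule F (VL F L) := LinearMap.range (oneMinusTauL F L)

abbrev T3L := L ⊗[F] (L ⊗[F] L)

noncomputable instance : Zero (T3L F L) :=
  (inferInstance : AddCommMonoid (T3L F L)).toAddMonoid.toZero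

/-- The bracket as a linear map on `L ⊗ L`. -/
noncomputable def lbL : VL F L →ₗ[F] L := TensorProduct.lift (bkL F L)

/-- The linear map with `(a ⊗ b) ⊗ (a' ⊗ b') ↦ [a,a'] ⊗ b ⊗ b' + a ⊗ [b,a'] ⊗ b' + a ⊗ a' ⊗ [b,b']`,
so that the classical Yang–Baxter expression is `c(r) = cmapL (r ⊗ r)`. -/
noncomputable def cmapL : (VL F L ⊗[F] VL F L) →ₗ[F] T3L F L :=
  ((TensorProduct.map (lbL F L) (LinearMap.id : VL F L →ₗ[F] VL F L)) ∘ₗ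
      (TensorProduct.tensorTensorTensorComm F L L L L).toLinearMap)
  + ((LinearMap.lTensor L
        ((TensorProduct.map (lbL F L) (LinearMap.id : L →ₗ[F] L)) ∘ₗ
          (TensorProduct.assoc F L L L).symm.toLinearMap)) ∘ₗ
      (TensorProduct.assoc F L L (VL F L)).toLinearMap)
  + (((TensorProduct.assoc F L L L).toLinearMap) ∘ₗ
      (TensorProduct.map (LinearMap.id : VL F L →ₗ[F] VL F L) (lbL F L)) ∘ₗ
      (TensorProduct.tensorTensorTensorComm F L L L L).toLinearMap)

/-- The classical Yang–Baxter expression `c(r)`. -/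
noncomputable def cybL (r : VL F L) : T3L F L := cmapL F L (r ⊗ₜ[F] r)

/-- The adjoint diagonal action of `x ∈ L` on `L ⊗ L ⊗ L`. -/
noncomputable def adT3L (x : L) : T3L F L →ₗ[F] T3L F L :=
  LinearMap.rTensor (VL F L) (bkL F L x) + LinearMap.lTensor L (adVbL F L x)

/-- The cyclic map `ξ : x₁ ⊗ x₂ ⊗ x₃ ↦ x₂ ⊗ x₃ ⊗ x₁`. -/
noncomputable def xiL : T3L F L →ₗ[F] T3L F L :=
  (TensorProduct.assoc F L L L).toLinearMap ∘ₗ (TensorProduct.comm F L (VL F L)).toLinearMap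

/-- `1 + ξ + ξ²` applied to an element of `L ⊗ L ⊗ L`. -/
noncomputable def cyclicSumL (t : T3L F L) : T3L F L := t + xiL F L t + xiL F L (xiL F L t)

/-- The coboundary `Δ_r : x ↦ x · r`. -/
noncomputable def DeltaR (r : VL F L) : L →ₗ[F] VL F L := (adVbL F L).flip r

/-!
Writing `r = (1 - τ) s`, both sides are quadratic in `s`, and their difference is `B s s` for the
bilinear map `B = coJacobiDefect F x`. A bilinear map on `L ⊗ L` is alternating as soon as it
vanishes on the diagonal of pure tensors and is antisymmetric on pairs of pure tensors; for `B`
both checks are identities among brackets of `x` and the tensor factors, which follow from the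
antisymmetry of the bracket and the Jacobi identity. In characteristic `2` the diagonal check is
not implied by the antisymmetric one.
-/

theorem LinearMap.isAlt_of_tmul {R M N P : Type*} [CommSemiring R] [AddCommMonoid M]
    [AddCommMonoid N] [AddCommMonoid P] [Module R M] [Module R N] [Module R P]
    {B : M ⊗[R] N →ₗ[R] M ⊗[R] N →ₗ[R] P}
    (h_self : ∀ m n, B (m ⊗ₜ n) (m ⊗ₜ n) = 0)
    (h_swap : ∀ m n m' n', B (m ⊗ₜ n) (m' ⊗ₜ n') + B (m' ⊗ₜ n') (m ⊗ₜ n) = 0) :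
    B.IsAlt := by
  have h_add_swap (u v : M ⊗[R] N) : B u v + B v u = 0 := by
    induction u using TensorProduct.induction_on with
    | zero => simp
    | add u₁ u₂ h₁ h₂ =>
      rw [map_add, LinearMap.add_apply, map_add, add_add_add_comm, h₁, h₂, add_zero]
    | tmul m n =>
      induction v using TensorProduct.induction_on with
      | zero => simp
      | add v₁ v₂ h₁ h₂ =>
        rw [map_add, map_add, LinearMap.add_apply, add_add_add_comm, h₁, h₂, add_zero]
      | tmul m' n' => exact h_swap m n m' n'
  intro s
  induction s using TensorProduct.induction_on with
  | zero => simp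
  | tmul m n => exact h_self m n
  | add u v hu hv =>
    simp only [map_add, LinearMap.add_apply, hu, hv, zero_add, add_zero]
    rw [add_comm, h_add_swap]

theorem lie_lie_eq_lie_lie_sub_lie_lie {L : Type*} [LieRing L] (x y z : L) :
    ⁅x, ⁅y, z⁆⁆ = ⁅⁅x, y⁆, z⁆ - ⁅⁅x, z⁆, y⁆ := by
  rw [leibniz_lie, ← lie_skew ⁅x, z⁆ y, sub_neg_eq_add]

section CoJacobi

variable {F L}

@[simp]
theorem oneMinusTauL_tmul (a b : L) : oneMinusTauL F L (a ⊗ₜ b) = a ⊗ₜ b - b ⊗ₜ a := rfl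

@[simp]
theorem adVbL_tmul (x a b : L) : adVbL F L x (a ⊗ₜ b) = ⁅x, a⁆ ⊗ₜ b + a ⊗ₜ ⁅x, b⁆ := by
  simp [adVbL, bkL]

@[simp]
theorem DeltaR_apply (r : VL F L) (x : L) : DeltaR F L r x = adVbL F L x r := rfl

@[simp]
theorem xiL_tmul (a b c : L) : xiL F L (a ⊗ₜ (b ⊗ₜ c)) = b ⊗ₜ (c ⊗ₜ a) := by
  simp [xiL]

@[simp]
theorem adT3L_tmul (x a b c : L) :
    adT3L F L x (a ⊗ₜ (b ⊗ₜ c))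
      = ⁅x, a⁆ ⊗ₜ (b ⊗ₜ c) + a ⊗ₜ (⁅x, b⁆ ⊗ₜ c) + a ⊗ₜ (b ⊗ₜ ⁅x, c⁆) := by
  simp [adT3L, bkL, tmul_add, add_assoc]

@[simp]
theorem cmapL_tmul (a b c d : L) :
    cmapL F L ((a ⊗ₜ b) ⊗ₜ (c ⊗ₜ d))
      = ⁅a, c⁆ ⊗ₜ (b ⊗ₜ d) + a ⊗ₜ (⁅b, c⁆ ⊗ₜ d) + a ⊗ₜ (c ⊗ₜ ⁅b, d⁆) := by
  simp [cmapL, lbL, bkL]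

variable (F) in
noncomputable def coJacobiDefect (x : L) : VL F L →ₗ[F] VL F L →ₗ[F] T3L F L :=
  LinearMap.mk₂ F (fun s t =>
      cyclicSumL F L (LinearMap.lTensor L (DeltaR F L (oneMinusTauL F L t))
        (DeltaR F L (oneMinusTauL F L s) x))
      - adT3L F L x (cmapL F L (oneMinusTauL F L s ⊗ₜ oneMinusTauL F L t)))
    (fun s s' t => by
      simp only [cyclicSumL, DeltaR, map_add, LinearMap.add_apply, add_tmul]; abel)
    (fun c s t => by
      simp only [cyclicSumL, DeltaR, map_smul, LinearMap.smul_apply, ← smul_tmul', smul_add,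
        smul_sub])
    (fun s t t' => by
      simp only [cyclicSumL, DeltaR, map_add, LinearMap.add_apply, LinearMap.lTensor_add,
        tmul_add]; abel)
    (fun c s t => by
      simp only [cyclicSumL, DeltaR, map_smul, LinearMap.smul_apply, LinearMap.lTensor_smul,
        tmul_smul, smul_add, smul_sub])

theorem coJacobiDefect_apply (x : L) (s t : VL F L) :
    coJacobiDefect F x s t =
      cyclicSumL F L (LinearMap.lTensor L (DeltaR F L (oneMinusTauL F L t))
        (DeltaR F L (oneMinusTauL F L s) x))
      - adT3L F L x (cmapL F L (oneMinusTauL F L s ⊗ₜ oneMinusTauL F L t)) := rfl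

theorem coJacobiDefect_tmul_self (x a b : L) : coJacobiDefect F x (a ⊗ₜ b) (a ⊗ₜ b) = 0 := by
  simp only [coJacobiDefect_apply, cyclicSumL, oneMinusTauL_tmul, DeltaR_apply, map_sub, map_add,
    map_neg, LinearMap.lTensor_tmul, adVbL_tmul, adT3L_tmul, cmapL_tmul, xiL_tmul,
    tmul_add, tmul_sub, sub_tmul, tmul_neg, neg_tmul, tmul_zero, zero_tmul,
    lie_self, ← lie_skew b a, lie_lie_eq_lie_lie_sub_lie_lie x a b]
  abel

theorem coJacobiDefect_tmul_add_swap (x a b c d : L) :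
    coJacobiDefect F x (a ⊗ₜ b) (c ⊗ₜ d) + coJacobiDefect F x (c ⊗ₜ d) (a ⊗ₜ b) = 0 := by
  simp only [coJacobiDefect_apply, cyclicSumL, oneMinusTauL_tmul, DeltaR_apply, map_sub, map_add,
    map_neg, LinearMap.lTensor_tmul, adVbL_tmul, adT3L_tmul, cmapL_tmul, xiL_tmul,
    tmul_add, tmul_sub, sub_tmul, tmul_neg, neg_tmul,
    ← lie_skew c a, ← lie_skew d a, ← lie_skew c b, ← lie_skew d b,
    lie_lie_eq_lie_lie_sub_lie_lie x a c, lie_lie_eq_lie_lie_sub_lie_lie x a d,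
    lie_lie_eq_lie_lie_sub_lie_lie x b c, lie_lie_eq_lie_lie_sub_lie_lie x b d]
  abel

end CoJacobi

/-- For a Lie algebra `L` and `r ∈ Im(1-τ)`,
`(1 + ξ + ξ²) ∘ (1 ⊗ Δ_r) ∘ Δ_r (x) = x · c(r)` for all `x ∈ L`. -/
theorem coJacobi_defect_eq_cyb :
    ∀ r ∈ skewImL F L, ∀ x : L,
      cyclicSumL F L (LinearMap.lTensor L (DeltaR F L r) (DeltaR F L r x))
        = adT3L F L x (cybL F L r) := by
  rintro r ⟨s, rfl⟩ x
  have h := LinearMap.isAlt_of_tmul (coJacobiDefect_tmul_self x) (coJacobiDefect_tmul_add_swap x) s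
  rwa [coJacobiDefect_apply, sub_eq_zero] at h
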